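/- arXiv:2511.15473 — 2 statements merged into one kernel-verified Lean document; each statement's English description precedes it below -/
import Mathlib

section
/- Every skew-symmetric matrix-valued symmetric bilinear form on the space of skew-symmetric n×n matrices that is invariant under conjugation by O(n) is a scalar multiple of the Frobenius inner product: there exists λ ∈ ℝ such that E • E' = λ tr(Eᵀ E') for all skew-symmetric E, E'. -/
/-!
The matrices `skewSingle i j = e_ij - e_ji` span the skew-symmetric matrices, so an invariant
bilinear form is determined by its values on pairs of them. Conjugating by the diagonal matrix
that flips the sign of the `i`-th coordinate negates `skewSingle i j` and fixes `skewSingle k l`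
whenever `i ∉ {k, l}`, so those values vanish unless `{i, j} = {k, l}`; conjugating by permutation
matrices shows that the remaining value `f (skewSingle i j) (skewSingle i j)` does not depend on
`i ≠ j`. Subtracting the right multiple of the (invariant) Frobenius form therefore leaves an
invariant form vanishing on all pairs of skew-symmetric matrices.
-/

lemma Equiv.Perm.exists_apply_eq_and_apply_eq {α : Type*} [DecidableEq α] {a₀ b₀ a b : α}
    (h₀ : a₀ ≠ b₀) (h : a ≠ b) : ∃ σ : Equiv.Perm α, σ a₀ = a ∧ σ b₀ = b := by
  set τ := Equiv.swap a₀ a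
  have hτ : τ b₀ ≠ a := fun hb => h₀ (τ.injective ((Equiv.swap_apply_left a₀ a).trans hb.symm))
  refine ⟨Equiv.swap (τ b₀) b * τ, ?_, Equiv.swap_apply_left _ _⟩
  rw [Equiv.Perm.mul_apply, Equiv.swap_apply_left, Equiv.swap_apply_of_ne_of_ne hτ.symm h]

namespace Matrix

variable {ι K : Type*} [DecidableEq ι] [CommRing K]

def skewSingle (i j : ι) : Matrix ι ι K := single i j 1 - single j i 1

@[simp]
lemma transpose_skewSingle (i j : ι) : (skewSingle i j : Matrix ι ι K)ᵀ = -skewSingle i j := by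
  simp [skewSingle, transpose_single]

@[simp]
lemma skewSingle_self (i : ι) : (skewSingle i i : Matrix ι ι K) = 0 := sub_self _

lemma skewSingle_comm (i j : ι) : (skewSingle j i : Matrix ι ι K) = -skewSingle i j :=
  (neg_sub _ _).symm

lemma submatrix_skewSingle (σ : Equiv.Perm ι) (i j : ι) :
    (skewSingle i j : Matrix ι ι K).submatrix σ σ = skewSingle (σ.symm i) (σ.symm j) := by
  simp [skewSingle, submatrix_sub]

variable [Fintype ι]

lemma diagonal_mul_single_mul_diagonal (d : ι → K) (i j : ι) (c : K) :
    diagonal d * single i j c * diagonal d = single i j (d i * c * d j) := by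
  ext a b
  simp only [diagonal_mul, mul_diagonal, single_apply]
  split_ifs with h
  · rw [h.1, h.2]
  · simp

lemma diagonal_mul_skewSingle_mul_diagonal (d : ι → K) (i j : ι) :
    diagonal d * skewSingle i j * diagonal d = (d i * d j) • skewSingle i j := by
  simp [skewSingle, mul_sub, sub_mul, diagonal_mul_single_mul_diagonal, smul_sub, smul_single,
    mul_comm]

lemma sum_smul_skewSingle (E : Matrix ι ι K) : ∑ i, ∑ j, E i j • skewSingle i j = E - Eᵀ := by
  simp only [skewSingle, smul_sub, Finset.sum_sub_distrib, smul_single, smul_eq_mul, mul_one]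
  rw [Finset.sum_comm (f := fun i j => single j i (E i j)), ← matrix_eq_sum_single]
  exact congrArg (E - ·) (matrix_eq_sum_single Eᵀ).symm

lemma mem_span_skewSingle [Invertible (2 : K)] {E : Matrix ι ι K} (hE : Eᵀ = -E) :
    E ∈ Submodule.span K (Set.range fun p : ι × ι => skewSingle p.1 p.2) := by
  have hE2 : E = (⅟2 : K) • ∑ i, ∑ j, E i j • skewSingle i j := by
    rw [sum_smul_skewSingle, hE, sub_neg_eq_add, ← two_smul K E, smul_smul, invOf_mul_self,
      one_smul]
  rw [hE2]
  exact Submodule.smul_mem _ _ (Submodule.sum_mem _ fun i _ => Submodule.sum_mem _ fun j _ =>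
    Submodule.smul_mem _ _ (Submodule.subset_span ⟨(i, j), rfl⟩))

lemma apply_eq_zero_of_forall_skewSingle [Invertible (2 : K)] {M : Type*} [AddCommGroup M]
    [Module K M] {F : Matrix ι ι K →ₗ[K] Matrix ι ι K →ₗ[K] M}
    (hF : ∀ i j k l, F (skewSingle i j) (skewSingle k l) = 0) {E E' : Matrix ι ι K}
    (hE : Eᵀ = -E) (hE' : E'ᵀ = -E') : F E E' = 0 := by
  have hleft : ∀ i j, F (skewSingle i j) E' = 0 := fun i j =>
    LinearMap.eqOn_span (g := 0) (by rintro _ ⟨⟨k, l⟩, rfl⟩; exact hF i j k l)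
      (mem_span_skewSingle hE')
  exact LinearMap.eqOn_span (f := F.flip E') (g := 0) (by rintro _ ⟨⟨i, j⟩, rfl⟩; exact hleft i j)
    (mem_span_skewSingle hE)

lemma inv_eq_transpose_of_mem_orthogonalGroup {O : Matrix ι ι K}
    (hO : O ∈ orthogonalGroup ι K) : O⁻¹ = Oᵀ :=
  inv_eq_left_inv ((mem_orthogonalGroup_iff' ι K).mp hO)

lemma permMatrix_mem_orthogonalGroup (σ : Equiv.Perm ι) :
    σ.permMatrix K ∈ orthogonalGroup ι K := by
  simp [mem_orthogonalGroup_iff, ← permMatrix_mul]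

lemma permMatrix_mul_mul_inv (σ : Equiv.Perm ι) (E : Matrix ι ι K) :
    σ.permMatrix K * E * (σ.permMatrix K)⁻¹ = E.submatrix σ σ := by
  rw [inv_eq_transpose_of_mem_orthogonalGroup (permMatrix_mem_orthogonalGroup σ),
    transpose_permMatrix, PEquiv.toMatrix_toPEquiv_mul, PEquiv.mul_toMatrix_toPEquiv]
  rfl

lemma diagonal_mem_orthogonalGroup {d : ι → K} (hd : ∀ a, d a * d a = 1) :
    diagonal d ∈ orthogonalGroup ι K := by
  simp [mem_orthogonalGroup_iff, hd]

def IsOrthConjInvariantOnSkew (F : Matrix ι ι K →ₗ[K] Matrix ι ι K →ₗ[K] K) : Prop :=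
  ∀ O ∈ orthogonalGroup ι K, ∀ E E' : Matrix ι ι K, Eᵀ = -E → E'ᵀ = -E' →
    F (O * E * O⁻¹) (O * E' * O⁻¹) = F E E'

namespace IsOrthConjInvariantOnSkew

variable {F G : Matrix ι ι K →ₗ[K] Matrix ι ι K →ₗ[K] K}

lemma sub (hF : IsOrthConjInvariantOnSkew F) (hG : IsOrthConjInvariantOnSkew G) :
    IsOrthConjInvariantOnSkew (F - G) := by
  intro O hO E E' hE hE'
  simp [hF O hO E E' hE hE', hG O hO E E' hE hE']

lemma smul (hF : IsOrthConjInvariantOnSkew F) (c : K) : IsOrthConjInvariantOnSkew (c • F) := by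
  intro O hO E E' hE hE'
  simp [hF O hO E E' hE hE']

lemma apply_skewSingle_perm (hF : IsOrthConjInvariantOnSkew F) (σ : Equiv.Perm ι)
    (i j k l : ι) :
    F (skewSingle (σ i) (σ j)) (skewSingle (σ k) (σ l)) = F (skewSingle i j) (skewSingle k l) := by
  have h := hF _ (permMatrix_mem_orthogonalGroup σ.symm) _ _
    (transpose_skewSingle i j) (transpose_skewSingle k l)
  simpa only [permMatrix_mul_mul_inv, submatrix_skewSingle, Equiv.symm_symm] using h

lemma apply_skewSingle_eq_zero [Invertible (2 : K)] (hF : IsOrthConjInvariantOnSkew F)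
    {i j k l : ι} (hij : i ≠ j) (hik : i ≠ k) (hil : i ≠ l) :
    F (skewSingle i j) (skewSingle k l) = 0 := by
  set d : ι → K := fun a => if a = i then -1 else 1
  have hd : ∀ a, d a * d a = 1 := fun a => by by_cases h : a = i <;> simp [d, h]
  have hO := diagonal_mem_orthogonalGroup hd
  have h : -F (skewSingle i j) (skewSingle k l) = F (skewSingle i j) (skewSingle k l) := by
    simpa [inv_eq_transpose_of_mem_orthogonalGroup hO, diagonal_mul_skewSingle_mul_diagonal, d,
      hij.symm, hik.symm, hil.symm]
      using hF _ hO _ _ (transpose_skewSingle i j) (transpose_skewSingle k l)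
  linear_combination (-⅟2 : K) * h - F (skewSingle i j) (skewSingle k l) * invOf_mul_self (2 : K)

lemma apply_skewSingle_eq_zero_of_self [Invertible (2 : K)] (hF : IsOrthConjInvariantOnSkew F)
    {i₀ j₀ : ι} (h₀ : i₀ ≠ j₀) (hF₀ : F (skewSingle i₀ j₀) (skewSingle i₀ j₀) = 0)
    (i j k l : ι) : F (skewSingle i j) (skewSingle k l) = 0 := by
  rcases eq_or_ne i j with rfl | hij
  · simp
  have hdiag : F (skewSingle i j) (skewSingle i j) = 0 := by
    obtain ⟨σ, rfl, rfl⟩ := Equiv.Perm.exists_apply_eq_and_apply_eq h₀ hij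
    rw [hF.apply_skewSingle_perm, hF₀]
  by_cases hi : i = k ∨ i = l
  · by_cases hj : j = k ∨ j = l
    · obtain ⟨rfl, rfl⟩ | ⟨rfl, rfl⟩ : (k = i ∧ l = j) ∨ (k = j ∧ l = i) := by grind
      · exact hdiag
      · rw [← neg_eq_zero, ← map_neg, ← skewSingle_comm]
        exact hdiag
    · obtain ⟨hjk, hjl⟩ := not_or.mp hj
      rw [← neg_neg (skewSingle i j), ← skewSingle_comm, map_neg, LinearMap.neg_apply,
        hF.apply_skewSingle_eq_zero hij.symm hjk hjl, neg_zero]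
  · obtain ⟨hik, hil⟩ := not_or.mp hi
    exact hF.apply_skewSingle_eq_zero hij hik hil

end IsOrthConjInvariantOnSkew

variable (ι K) in
def frobeniusForm : Matrix ι ι K →ₗ[K] Matrix ι ι K →ₗ[K] K :=
  LinearMap.mk₂ K (fun E E' => (Eᵀ * E').trace) (by simp [add_mul, trace_add]) (by simp)
    (by simp [mul_add, trace_add]) (by simp)

lemma frobeniusForm_apply (E E' : Matrix ι ι K) : frobeniusForm ι K E E' = (Eᵀ * E').trace :=
  rfl

lemma frobeniusForm_skewSingle_self {i j : ι} (hij : i ≠ j) :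
    frobeniusForm ι K (skewSingle i j) (skewSingle i j) = 2 := by
  norm_num [frobeniusForm_apply, skewSingle, mul_sub, sub_mul, single_mul_single_of_ne, hij,
    hij.symm]

lemma isOrthConjInvariantOnSkew_frobeniusForm :
    IsOrthConjInvariantOnSkew (frobeniusForm ι K) := by
  intro O hO E E' _ _
  have hOO : Oᵀ * O = 1 := (mem_orthogonalGroup_iff' ι K).mp hO
  simp only [frobeniusForm_apply, inv_eq_transpose_of_mem_orthogonalGroup hO, transpose_mul,
    transpose_transpose]
  calc (O * (Eᵀ * Oᵀ) * (O * E' * Oᵀ)).trace = (O * (Eᵀ * (Oᵀ * O) * E') * Oᵀ).trace := by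
        simp only [Matrix.mul_assoc]
    _ = (Oᵀ * (O * (Eᵀ * E'))).trace := by rw [hOO, Matrix.mul_one, trace_mul_comm]
    _ = (Eᵀ * E').trace := by rw [← Matrix.mul_assoc, hOO, Matrix.one_mul]

theorem exists_eq_mul_trace_of_isOrthConjInvariantOnSkew [Nontrivial ι] [Invertible (2 : K)]
    {f : Matrix ι ι K →ₗ[K] Matrix ι ι K →ₗ[K] K} (hf : IsOrthConjInvariantOnSkew f) :
    ∃ l : K, ∀ E E' : Matrix ι ι K, Eᵀ = -E → E'ᵀ = -E' → f E E' = l * (Eᵀ * E').trace := by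
  obtain ⟨i₀, j₀, h₀⟩ := exists_pair_ne ι
  set l := f (skewSingle i₀ j₀) (skewSingle i₀ j₀) * ⅟2
  set F := f - l • frobeniusForm ι K
  have hF : IsOrthConjInvariantOnSkew F := hf.sub (isOrthConjInvariantOnSkew_frobeniusForm.smul l)
  have hF₀ : F (skewSingle i₀ j₀) (skewSingle i₀ j₀) = 0 := by
    rw [LinearMap.sub_apply, LinearMap.sub_apply, LinearMap.smul_apply, LinearMap.smul_apply,
      frobeniusForm_skewSingle_self h₀, smul_eq_mul, invOf_mul_cancel_right, sub_self]
  refine ⟨l, fun E E' hE hE' => ?_⟩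
  have := apply_eq_zero_of_forall_skewSingle (hF.apply_skewSingle_eq_zero_of_self h₀ hF₀) hE hE'
  simpa [F, sub_eq_zero, frobeniusForm_apply] using this

end Matrix

open Matrix

theorem stmt_7_general (n : ℕ) (hn : 2 ≤ n)
    (f : Matrix (Fin n) (Fin n) ℝ →ₗ[ℝ] Matrix (Fin n) (Fin n) ℝ →ₗ[ℝ] ℝ)
    (hinv : ∀ O : Matrix (Fin n) (Fin n) ℝ,
      O ∈ Matrix.orthogonalGroup (Fin n) ℝ →
      ∀ E E' : Matrix (Fin n) (Fin n) ℝ, Eᵀ = -E → E'ᵀ = -E' →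
        f (O * E * O⁻¹) (O * E' * O⁻¹) = f E E') :
    ∃ l : ℝ, ∀ E E' : Matrix (Fin n) (Fin n) ℝ, Eᵀ = -E → E'ᵀ = -E' →
      f E E' = l * (Eᵀ * E').trace := by
  have : Nontrivial (Fin n) := Fin.nontrivial_iff_two_le.mpr hn
  exact exists_eq_mul_trace_of_isOrthConjInvariantOnSkew hinv

/-- Every symmetric bilinear form on the space of real skew-symmetric n×n
matrices that is invariant under conjugation by O(n) is a scalar multiple of
the Frobenius inner product tr(Eᵀ E'). -/
theorem stmt_7 (n : ℕ) (hn : 2 ≤ n)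
    (f : Matrix (Fin n) (Fin n) ℝ →ₗ[ℝ] Matrix (Fin n) (Fin n) ℝ →ₗ[ℝ] ℝ)
    (hsymm : ∀ E E' : Matrix (Fin n) (Fin n) ℝ,
      Eᵀ = -E → E'ᵀ = -E' → f E E' = f E' E)
    (hinv : ∀ O : Matrix (Fin n) (Fin n) ℝ,
      O ∈ Matrix.orthogonalGroup (Fin n) ℝ →
      ∀ E E' : Matrix (Fin n) (Fin n) ℝ, Eᵀ = -E → E'ᵀ = -E' →
        f (O * E * O⁻¹) (O * E' * O⁻¹) = f E E') :
    ∃ l : ℝ, ∀ E E' : Matrix (Fin n) (Fin n) ℝ, Eᵀ = -E → E'ᵀ = -E' →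
      f E E' = l * (Eᵀ * E').trace :=
  stmt_7_general n hn f hinv
end

section
/- The subspaces span{Id}, Sym₀ (trace-free symmetric matrices), and Skew (skew-symmetric matrices) of the n×n real matrices are irreducible under the conjugation action of O(n): their only O(n)-invariant linear subspaces are {0} and themselves. -/
/-!
Conjugating by the diagonal sign matrices `diag(±1)` and taking differences isolates, from any
matrix `A` of an invariant subspace `W`, the symmetric pair of entries
`A k l • E_kl + A l k • E_lk`; conjugating by permutation matrices moves this pair to any other
off-diagonal position. So once `W` contains a matrix with a nonzero off-diagonal entry, it
contains every `E_kl - E_lk` (skew case) or every `E_kl + E_lk` (symmetric case). In the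
symmetric case the reflection acting as `[[1, 1], [1, -1]] / √2` on the `(i, j)`-plane turns
`E_ij + E_ji` into `E_ii - E_jj`, which together span `Sym₀`; it also turns a nonzero traceless
diagonal matrix into one with a nonzero off-diagonal entry.
-/

open Matrix

theorem Submodule.eq_bot_or_mem_of_forall_eq_smul {K M : Type*} [Field K] [AddCommGroup M]
    [Module K M] {W : Submodule K M} {v : M} (h : ∀ x ∈ W, ∃ c : K, x = c • v) :
    W = ⊥ ∨ v ∈ W := by
  refine or_iff_not_imp_left.2 fun hW => ?_
  obtain ⟨x, hx, hx0⟩ := W.exists_mem_ne_zero_of_ne_bot hW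
  obtain ⟨c, rfl⟩ := h x hx
  exact (W.smul_mem_iff (left_ne_zero_of_smul hx0)).1 hx

theorem Submodule.sum_smul_mem_of_sum_eq_zero {R M ι : Type*} [Ring R] [AddCommGroup M]
    [Module R M] {W : Submodule R M} {s : Finset ι} {c : ι → R} {v : ι → M} (z : ι)
    (hv : ∀ k ∈ s, k ≠ z → v k - v z ∈ W) (hc : ∑ k ∈ s, c k = 0) :
    ∑ k ∈ s, c k • v k ∈ W := by
  have h : ∑ k ∈ s, c k • v k = ∑ k ∈ s, c k • (v k - v z) := by
    simp [smul_sub, Finset.sum_sub_distrib, ← Finset.sum_smul, hc]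
  rw [h]
  refine W.sum_mem fun k hk => W.smul_mem _ ?_
  rcases eq_or_ne k z with rfl | hkz
  · simp
  · exact hv k hk hkz

theorem Equiv.Perm.exists_apply_eq_and_apply_eq_s9 {ι : Type*} [DecidableEq ι] {i j k l : ι}
    (hij : i ≠ j) (hkl : k ≠ l) : ∃ σ : Equiv.Perm ι, σ k = i ∧ σ l = j := by
  set τ := Equiv.swap k i
  have hτl : τ l ≠ i := by
    rw [← Equiv.swap_apply_left k i]
    exact τ.injective.ne hkl.symm
  refine ⟨τ.trans (Equiv.swap (τ l) j), ?_, Equiv.swap_apply_left _ _⟩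
  simp only [Equiv.trans_apply, τ, Equiv.swap_apply_left]
  exact Equiv.swap_apply_of_ne_of_ne hτl.symm hij

theorem Real.inv_sqrt_two_mul_self : (√2)⁻¹ * (√2)⁻¹ = (2⁻¹ : ℝ) := by
  rw [← mul_inv, Real.mul_self_sqrt zero_le_two]

namespace Matrix

variable {ι : Type*}

theorem exists_diag_ne_of_trace_eq_zero [Fintype ι] {K : Type*} [Field K] [CharZero K]
    {A : Matrix ι ι K} (htr : A.trace = 0) {a : ι} (ha : A a a ≠ 0) :
    ∃ j, A j j ≠ A a a := by
  by_contra! h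
  have : (Fintype.card ι : K) * A a a = 0 := by
    simpa [trace, Finset.sum_congr rfl fun k _ => h k] using htr
  have hcard : (Fintype.card ι : K) ≠ 0 :=
    Nat.cast_ne_zero.2 (Fintype.card_pos_iff.2 ⟨a⟩).ne'
  exact ha ((mul_eq_zero.1 this).resolve_left hcard)

theorem diag_eq_zero_of_transpose_eq_neg {α : Type*} [Ring α] [NoZeroDivisors α] [CharZero α]
    {E : Matrix ι ι α} (hE : Eᵀ = -E) : E.diag = 0 :=
  funext fun k => self_eq_neg.1 (by simpa using congrArg (· k k) hE)

variable [DecidableEq ι]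

theorem single_add_single_of_transpose_eq {α : Type*} [Ring α] {E : Matrix ι ι α}
    (hE : Eᵀ = E) (i j k l : ι) :
    single k l (E i j) + single l k (E j i) = E i j • (single k l 1 + single l k 1) := by
  have : E j i = E i j := by simpa using congrArg (· i j) hE
  simp [this, smul_add, smul_single]

theorem single_add_single_of_transpose_eq_neg {α : Type*} [Ring α] {E : Matrix ι ι α}
    (hE : Eᵀ = -E) (i j k l : ι) :
    single k l (E i j) + single l k (E j i) = E i j • (single k l 1 - single l k 1) := by
  have : E j i = -E i j := by simpa using congrArg (· i j) hE
  simp [this, smul_single, sub_eq_add_neg, single_neg]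

def signFlip (k : ι) : Matrix ι ι ℝ := diagonal fun a => if a = k then -1 else 1

noncomputable def planeReflection (i j : ι) : Matrix ι ι ℝ :=
  1 - single i i 1 - single j j 1 +
    (√2)⁻¹ • (single i i 1 + single i j 1 + single j i 1 - single j j 1)

theorem planeReflection_transpose (i j : ι) :
    (planeReflection i j)ᵀ = planeReflection i j := by
  simp only [planeReflection, transpose_add, transpose_sub, transpose_one, transpose_smul,
    transpose_single]
  module

variable [Fintype ι]

theorem mem_of_single_add_single_mem {K : Type*} [Field K] [CharZero K]
    {W : Submodule K (Matrix ι ι K)} {E : Matrix ι ι K}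
    (hoff : ∀ k l, k ≠ l → single k l (E k l) + single l k (E l k) ∈ W)
    (hdiag : diagonal E.diag ∈ W) : E ∈ W := by
  set F := E - diagonal E.diag
  have hF : F + F = ∑ k, ∑ l, (single k l (F k l) + single l k (F l k)) := by
    simp only [Finset.sum_add_distrib]
    rw [Finset.sum_comm (f := fun k l => single l k (F l k)), ← matrix_eq_sum_single]
  have hFW : F ∈ W := by
    rw [← W.smul_mem_iff (two_ne_zero (α := K)), two_smul, hF]
    refine W.sum_mem fun k _ => W.sum_mem fun l _ => ?_
    rcases eq_or_ne k l with rfl | hkl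
    · simp [F]
    · simpa [F, diagonal_apply_ne _ hkl, diagonal_apply_ne _ hkl.symm] using hoff k l hkl
  simpa [F] using W.add_mem hFW hdiag

theorem diagonal_diag_mem_of_trace_eq_zero {K : Type*} [Field K]
    {W : Submodule K (Matrix ι ι K)} {E : Matrix ι ι K} (z : ι)
    (hdiag : ∀ k, k ≠ z → single k k 1 - single z z 1 ∈ W) (htr : E.trace = 0) :
    diagonal E.diag ∈ W := by
  have h : diagonal E.diag = ∑ k, E k k • single k k 1 := by
    simp [← sum_single_eq_diagonal, smul_single]
  rw [h]
  exact Submodule.sum_smul_mem_of_sum_eq_zero z (fun k _ => hdiag k) htr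

theorem permMatrix_mul_transpose (σ : Equiv.Perm ι) :
    σ.permMatrix ℝ * (σ.permMatrix ℝ)ᵀ = 1 := by
  rw [transpose_permMatrix, ← permMatrix_mul, inv_mul_cancel, permMatrix_one]

theorem permMatrix_mul_mul_transpose (σ : Equiv.Perm ι) (A : Matrix ι ι ℝ) :
    σ.permMatrix ℝ * A * (σ.permMatrix ℝ)ᵀ = A.submatrix σ σ := by
  rw [transpose_permMatrix, PEquiv.toMatrix_toPEquiv_mul, PEquiv.mul_toMatrix_toPEquiv,
    submatrix_submatrix]
  rfl

theorem signFlip_mul_transpose (k : ι) : signFlip k * (signFlip k)ᵀ = 1 := by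
  rw [signFlip, diagonal_transpose, diagonal_mul_diagonal, ← diagonal_one]
  congr 1
  ext a
  split_ifs <;> norm_num

theorem signFlip_mul_mul_transpose_apply (k : ι) (A : Matrix ι ι ℝ) (a b : ι) :
    (signFlip k * A * (signFlip k)ᵀ) a b =
      (if a = k then -1 else 1) * A a b * (if b = k then -1 else 1) := by
  simp [signFlip, diagonal_mul, mul_diagonal]

theorem planeReflection_mul_transpose {i j : ι} (hij : i ≠ j) :
    planeReflection i j * (planeReflection i j)ᵀ = 1 := by
  rw [planeReflection_transpose]
  simp only [planeReflection, mul_add, add_mul, mul_sub, sub_mul, mul_one, one_mul,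
    smul_mul_assoc, mul_smul_comm, smul_add, smul_sub, smul_smul, single_mul_single_same,
    single_mul_single_of_ne, hij, hij.symm, ne_eq, not_false_eq_true, smul_zero,
    Real.inv_sqrt_two_mul_self]
  module

theorem planeReflection_conj_single_add_single {i j : ι} (hij : i ≠ j) :
    planeReflection i j * (single i j 1 + single j i 1) * (planeReflection i j)ᵀ =
      single i i 1 - single j j 1 := by
  rw [planeReflection_transpose]
  simp only [planeReflection, mul_add, add_mul, mul_sub, sub_mul, mul_one, one_mul,
    smul_mul_assoc, mul_smul_comm, smul_add, smul_sub, smul_smul, single_mul_single_same,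
    single_mul_single_of_ne, hij, hij.symm, ne_eq, not_false_eq_true, smul_zero,
    Real.inv_sqrt_two_mul_self]
  module

theorem planeReflection_conj_apply {i j : ι} (hij : i ≠ j) (A : Matrix ι ι ℝ) :
    (planeReflection i j * A * (planeReflection i j)ᵀ) i j =
      (A i i - A i j + A j i - A j j) / 2 := by
  rw [planeReflection_transpose]
  simp [planeReflection, mul_add, add_mul, mul_sub, sub_mul, smul_add, smul_sub, hij,
    hij.symm]
  linear_combination (A i i - A i j + A j i - A j j) * Real.inv_sqrt_two_mul_self

def IsOrthogonalConjInvariant (W : Submodule ℝ (Matrix ι ι ℝ)) : Prop :=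
  ∀ O ∈ orthogonalGroup ι ℝ, ∀ E ∈ W, O * E * O⁻¹ ∈ W

namespace IsOrthogonalConjInvariant

variable {W : Submodule ℝ (Matrix ι ι ℝ)}

theorem conj_mem (hW : IsOrthogonalConjInvariant W) {O E : Matrix ι ι ℝ} (hO : O * Oᵀ = 1)
    (hE : E ∈ W) : O * E * Oᵀ ∈ W := by
  simpa [inv_eq_right_inv hO] using hW O ((mem_orthogonalGroup_iff ι ℝ).2 hO) E hE

theorem single_add_single_mem (hW : IsOrthogonalConjInvariant W) {A : Matrix ι ι ℝ}
    (hA : A ∈ W) {k l : ι} (hkl : k ≠ l) : single k l (A k l) + single l k (A l k) ∈ W := by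
  set X := A - signFlip k * A * (signFlip k)ᵀ
  have hX : X ∈ W := W.sub_mem hA (hW.conj_mem (signFlip_mul_transpose k) hA)
  have hY : X - signFlip l * X * (signFlip l)ᵀ ∈ W :=
    W.sub_mem hX (hW.conj_mem (signFlip_mul_transpose l) hX)
  have hY_eq : X - signFlip l * X * (signFlip l)ᵀ =
      (4 : ℝ) • (single k l (A k l) + single l k (A l k)) := by
    ext a b
    simp only [X, sub_apply, signFlip_mul_mul_transpose_apply, smul_apply, add_apply,
      single_apply, smul_eq_mul]
    -- entry `(a, b)` survives both differences iff exactly one of `a, b` is `k` and one is `l`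
    split_ifs <;> grind
  rwa [hY_eq, W.smul_mem_iff (by norm_num)] at hY

theorem single_add_single_mem_of_ne (hW : IsOrthogonalConjInvariant W) {A : Matrix ι ι ℝ}
    (hA : A ∈ W) {i j k l : ι} (hij : i ≠ j) (hkl : k ≠ l) :
    single k l (A i j) + single l k (A j i) ∈ W := by
  obtain ⟨σ, hk, hl⟩ := Equiv.Perm.exists_apply_eq_and_apply_eq_s9 hij hkl
  have hσA : A.submatrix σ σ ∈ W :=
    permMatrix_mul_mul_transpose σ A ▸ hW.conj_mem (permMatrix_mul_transpose σ) hA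
  simpa [hk, hl] using hW.single_add_single_mem hσA hkl

theorem exists_mem_offDiag_ne_zero (hW : IsOrthogonalConjInvariant W) {A : Matrix ι ι ℝ}
    (hA : A ∈ W) (hA0 : A ≠ 0) (htr : A.trace = 0) :
    ∃ B ∈ W, ∃ i j, i ≠ j ∧ B i j ≠ 0 := by
  by_cases hoff : ∃ i j, i ≠ j ∧ A i j ≠ 0
  · exact ⟨A, hA, hoff⟩
  push Not at hoff
  obtain ⟨a, b, hab⟩ : ∃ a b, A a b ≠ 0 := by
    by_contra! h
    exact hA0 (Matrix.ext h)
  obtain rfl : a = b := by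
    by_contra h
    exact hab (hoff a b h)
  obtain ⟨j, hj⟩ := exists_diag_ne_of_trace_eq_zero htr hab
  have haj : a ≠ j := by
    rintro rfl
    exact hj rfl
  refine ⟨_, hW.conj_mem (planeReflection_mul_transpose haj) hA, a, j, haj, ?_⟩
  rw [planeReflection_conj_apply haj, hoff a j haj, hoff j a haj.symm]
  intro h
  exact hj (by linarith)

theorem eq_bot_or_forall_skew_mem (hW : IsOrthogonalConjInvariant W)
    (hskew : ∀ E ∈ W, Eᵀ = -E) :
    W = ⊥ ∨ ∀ E : Matrix ι ι ℝ, Eᵀ = -E → E ∈ W := by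
  refine or_iff_not_imp_left.2 fun hne E hE => ?_
  obtain ⟨A, hA, hA0⟩ := W.exists_mem_ne_zero_of_ne_bot hne
  obtain ⟨i, j, hAij⟩ : ∃ i j, A i j ≠ 0 := by
    by_contra! h
    exact hA0 (Matrix.ext h)
  have hij : i ≠ j := by
    rintro rfl
    exact hAij (congrFun (diag_eq_zero_of_transpose_eq_neg (hskew A hA)) i)
  have hgen : ∀ k l, k ≠ l → single k l 1 - single l k 1 ∈ W := fun k l hkl => by
    have h := hW.single_add_single_mem_of_ne hA hij hkl
    rwa [single_add_single_of_transpose_eq_neg (hskew A hA), W.smul_mem_iff hAij] at h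
  refine mem_of_single_add_single_mem (fun k l hkl => ?_) ?_
  · rw [single_add_single_of_transpose_eq_neg hE]
    exact W.smul_mem _ (hgen k l hkl)
  · simp [diag_eq_zero_of_transpose_eq_neg hE]

theorem eq_bot_or_forall_traceless_symm_mem (hW : IsOrthogonalConjInvariant W)
    (hsymm : ∀ E ∈ W, Eᵀ = E ∧ E.trace = 0) :
    W = ⊥ ∨ ∀ E : Matrix ι ι ℝ, Eᵀ = E → E.trace = 0 → E ∈ W := by
  refine or_iff_not_imp_left.2 fun hne E hE htr => ?_
  obtain ⟨A₀, hA₀, hA₀0⟩ := W.exists_mem_ne_zero_of_ne_bot hne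
  obtain ⟨A, hA, i, j, hij, hAij⟩ :=
    hW.exists_mem_offDiag_ne_zero hA₀ hA₀0 (hsymm A₀ hA₀).2
  have hS : ∀ k l, k ≠ l → single k l 1 + single l k 1 ∈ W := fun k l hkl => by
    have h := hW.single_add_single_mem_of_ne hA hij hkl
    rwa [single_add_single_of_transpose_eq (hsymm A hA).1, W.smul_mem_iff hAij] at h
  have hD : ∀ k l, k ≠ l → single k k 1 - single l l 1 ∈ W := fun k l hkl =>
    planeReflection_conj_single_add_single hkl ▸
      hW.conj_mem (planeReflection_mul_transpose hkl) (hS k l hkl)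
  refine mem_of_single_add_single_mem (fun k l hkl => ?_)
    (diagonal_diag_mem_of_trace_eq_zero i (fun k hk => hD k i hk) htr)
  rw [single_add_single_of_transpose_eq hE]
  exact W.smul_mem _ (hS k l hkl)

end IsOrthogonalConjInvariant

end Matrix

theorem stmt_9_general (n : ℕ) :
    (∀ W : Submodule ℝ (Matrix (Fin n) (Fin n) ℝ),
      (∀ E ∈ W, ∃ c : ℝ, E = c • (1 : Matrix (Fin n) (Fin n) ℝ)) →
      (∀ O : Matrix (Fin n) (Fin n) ℝ, O ∈ Matrix.orthogonalGroup (Fin n) ℝ →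
        ∀ E ∈ W, O * E * O⁻¹ ∈ W) →
      W = ⊥ ∨ ∀ E : Matrix (Fin n) (Fin n) ℝ,
        (∃ c : ℝ, E = c • (1 : Matrix (Fin n) (Fin n) ℝ)) → E ∈ W) ∧
    (∀ W : Submodule ℝ (Matrix (Fin n) (Fin n) ℝ),
      (∀ E ∈ W, Eᵀ = E ∧ E.trace = 0) →
      (∀ O : Matrix (Fin n) (Fin n) ℝ, O ∈ Matrix.orthogonalGroup (Fin n) ℝ →
        ∀ E ∈ W, O * E * O⁻¹ ∈ W) →
      W = ⊥ ∨ ∀ E : Matrix (Fin n) (Fin n) ℝ, Eᵀ = E → E.trace = 0 → E ∈ W) ∧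
    (∀ W : Submodule ℝ (Matrix (Fin n) (Fin n) ℝ),
      (∀ E ∈ W, Eᵀ = -E) →
      (∀ O : Matrix (Fin n) (Fin n) ℝ, O ∈ Matrix.orthogonalGroup (Fin n) ℝ →
        ∀ E ∈ W, O * E * O⁻¹ ∈ W) →
      W = ⊥ ∨ ∀ E : Matrix (Fin n) (Fin n) ℝ, Eᵀ = -E → E ∈ W) := by
  refine ⟨fun W hscalar _ => ?_,
    fun W hsymm hW => IsOrthogonalConjInvariant.eq_bot_or_forall_traceless_symm_mem hW hsymm,
    fun W hskew hW => IsOrthogonalConjInvariant.eq_bot_or_forall_skew_mem hW hskew⟩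
  refine (W.eq_bot_or_mem_of_forall_eq_smul hscalar).imp_right fun h1 E ⟨c, hE⟩ => ?_
  exact hE ▸ W.smul_mem c h1

/-- The subspaces span{Id}, Sym₀ (trace-free symmetric matrices), and Skew
(skew-symmetric matrices) of the n×n real matrices are irreducible under the
conjugation action of O(n): any O(n)-invariant subspace contained in one of
them is either {0} or the whole subspace. -/
theorem stmt_9 (n : ℕ) (hn : 2 ≤ n) :
    (∀ W : Submodule ℝ (Matrix (Fin n) (Fin n) ℝ),
      (∀ E ∈ W, ∃ c : ℝ, E = c • (1 : Matrix (Fin n) (Fin n) ℝ)) →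
      (∀ O : Matrix (Fin n) (Fin n) ℝ, O ∈ Matrix.orthogonalGroup (Fin n) ℝ →
        ∀ E ∈ W, O * E * O⁻¹ ∈ W) →
      W = ⊥ ∨ ∀ E : Matrix (Fin n) (Fin n) ℝ,
        (∃ c : ℝ, E = c • (1 : Matrix (Fin n) (Fin n) ℝ)) → E ∈ W) ∧
    (∀ W : Submodule ℝ (Matrix (Fin n) (Fin n) ℝ),
      (∀ E ∈ W, Eᵀ = E ∧ E.trace = 0) →
      (∀ O : Matrix (Fin n) (Fin n) ℝ, O ∈ Matrix.orthogonalGroup (Fin n) ℝ →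
        ∀ E ∈ W, O * E * O⁻¹ ∈ W) →
      W = ⊥ ∨ ∀ E : Matrix (Fin n) (Fin n) ℝ, Eᵀ = E → E.trace = 0 → E ∈ W) ∧
    (∀ W : Submodule ℝ (Matrix (Fin n) (Fin n) ℝ),
      (∀ E ∈ W, Eᵀ = -E) →
      (∀ O : Matrix (Fin n) (Fin n) ℝ, O ∈ Matrix.orthogonalGroup (Fin n) ℝ →
        ∀ E ∈ W, O * E * O⁻¹ ∈ W) →
      W = ⊥ ∨ ∀ E : Matrix (Fin n) (Fin n) ℝ, Eᵀ = -E → E ∈ W) :=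
  stmt_9_general n
end
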